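/- Let α = α(S) satisfy α_k / S → π̄_k with π̄ ∈ int Δ^{K−1} as S → ∞, where S = Σ_k α_k. Then the mutual information of the Dirichlet–categorical model, I = H(E[π]) − E[H(π)], where H(E[π]) = −Σ_k (α_k/S) log(α_k/S) and E[H(π)] = −Σ_k (α_k/S)(ψ(α_k+1) − ψ(S+1)), satisfies I = (K−1)/(2S) + O(1/S²). -/

import Mathlib

open MeasureTheory Real Filter Finset

/-- The digamma function `ψ(x) = d/dx log Γ(x)`. -/
noncomputable def digamma (x : ℝ) : ℝ := deriv (fun y => Real.log (Real.Gamma y)) x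

/-- Multivariate Beta function `B(α) = (∏ Γ(α_k)) / Γ(Σ α_k)`. -/
noncomputable def multiBeta {K : ℕ} (α : Fin K → ℝ) : ℝ :=
  (∏ k, Real.Gamma (α k)) / Real.Gamma (∑ k, α k)

/-- Parameterization domain: the open corner `{x | x_i > 0, Σ x_i < 1}` of ℝ^K,
parameterizing the interior of the simplex Δ^K via the last coordinate `1 - Σ x_i`. -/
def openCorner (K : ℕ) : Set (Fin K → ℝ) := {x | (∀ i, 0 < x i) ∧ ∑ i, x i < 1}

/-- Full simplex point `pp ∈ Δ^K ⊂ ℝ^{K+1}` determined by its first `K` coordinates. -/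
noncomputable def fullSimplex {K : ℕ} (x : Fin K → ℝ) : Fin (K + 1) → ℝ :=
  Fin.snoc x (1 - ∑ i, x i)

/-- Dirichlet density with parameter `α`, expressed in the coordinates of `openCorner K`. -/
noncomputable def dirichletPDF {K : ℕ} (α : Fin (K + 1) → ℝ) (x : Fin K → ℝ) : ℝ :=
  (multiBeta α)⁻¹ * ∏ k, (fullSimplex x k) ^ (α k - 1)

/-- Dirichlet density evaluated at a full simplex vector `pp ∈ ℝ^K`. -/
noncomputable def dirDensity {K : ℕ} (α : Fin K → ℝ) (pp : Fin K → ℝ) : ℝ :=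
  (multiBeta α)⁻¹ * ∏ k, (pp k) ^ (α k - 1)

/-!
Write `ψ(x + 1) = log x + 1/(2x) + R(x)`. With `p_k = α_k / S`, the mutual information minus
`(K - 1)/(2S)` is exactly `∑ p_k R(α_k) - R(S)`, so it suffices that `|R(x)| ≤ 6/x²` for `x ≥ 2`,
since `α_k ≥ π̄_k S / 2` eventually turns `p_k |R(α_k)|` into `O(1/(π̄_k S²))`.

Convexity of `log Γ` together with `log Γ(x + 1) - log Γ(x) = log x` gives
`ψ(x) ≤ log x ≤ ψ(x + 1)`, hence `R(x) → 0`. By the recurrence `ψ(x + 2) = ψ(x + 1) + 1/(x + 1)`,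
`R(y) - R(y + 1)` is the Taylor remainder `log (1 + t) - (t - t²/2) = O(t³)` at `t = 1/y`, minus
`1/(2y²(y + 1))`; together these are dominated by `6/y² - 6/(y + 1)²`, and telescoping along `x + n`
bounds `R(x)`.
-/

open scoped Topology

lemma differentiableAt_log_Gamma {x : ℝ} (hx : 0 < x) :
    DifferentiableAt ℝ (fun y => log (Gamma y)) x :=
  (differentiableAt_Gamma fun m h => by linarith [m.cast_nonneg (α := ℝ)]).log
    (Gamma_pos_of_pos hx).ne'

lemma digamma_add_one {x : ℝ} (hx : 0 < x) : digamma (x + 1) = digamma x + x⁻¹ := by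
  have hrec : (fun y => log (Gamma (y + 1))) =ᶠ[𝓝 x] fun y => log (Gamma y) + log y := by
    filter_upwards [eventually_gt_nhds hx] with y hy
    rw [Gamma_add_one hy.ne', log_mul hy.ne' (Gamma_pos_of_pos hy).ne', add_comm]
  rw [digamma, ← deriv_comp_add_const, hrec.deriv_eq,
    deriv_fun_add (differentiableAt_log_Gamma hx) (differentiableAt_log hx.ne'), deriv_log, digamma]

lemma slope_log_Gamma {x : ℝ} (hx : 0 < x) : slope (log ∘ Gamma) x (x + 1) = log x := by
  rw [slope_def_field, Function.comp_apply, Function.comp_apply, Gamma_add_one hx.ne',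
    log_mul hx.ne' (Gamma_pos_of_pos hx).ne']
  ring

lemma digamma_le_log {x : ℝ} (hx : 0 < x) : digamma x ≤ log x :=
  slope_log_Gamma hx ▸ convexOn_log_Gamma.deriv_le_slope hx (by simp; linarith) (by linarith)
    (differentiableAt_log_Gamma hx)

lemma log_le_digamma_add_one {x : ℝ} (hx : 0 < x) : log x ≤ digamma (x + 1) :=
  slope_log_Gamma hx ▸ convexOn_log_Gamma.slope_le_deriv hx (by simp; linarith) (by linarith)
    (differentiableAt_log_Gamma (by linarith))

noncomputable def digammaRemainder (x : ℝ) : ℝ := digamma (x + 1) - log x - (2 * x)⁻¹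

lemma tendsto_digammaRemainder_atTop : Tendsto digammaRemainder atTop (𝓝 0) := by
  have hgap : Tendsto (fun x => digamma (x + 1) - log x) atTop (𝓝 0) := by
    refine squeeze_zero' ?_ ?_ tendsto_inv_atTop_zero
    · filter_upwards [eventually_gt_atTop 0] with x hx
      exact sub_nonneg.2 (log_le_digamma_add_one hx)
    · filter_upwards [eventually_gt_atTop 0] with x hx
      linarith [digamma_add_one hx, digamma_le_log hx]
  have hhalf : Tendsto (fun x : ℝ => (2 * x)⁻¹) atTop (𝓝 0) :=
    tendsto_inv_atTop_zero.comp (tendsto_id.const_mul_atTop two_pos)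
  rw [← sub_zero (0 : ℝ)]
  exact hgap.sub hhalf

lemma abs_log_one_add_sub_le {t : ℝ} (ht₀ : 0 ≤ t) (ht : t ≤ 1 / 2) :
    |log (1 + t) - (t - t ^ 2 / 2)| ≤ 2 * t ^ 3 := by
  have h := abs_log_sub_add_sum_range_le (x := -t) (by rw [abs_neg, abs_of_nonneg ht₀]; linarith) 2
  have htaylor : ∑ i ∈ range 2, (-t) ^ (i + 1) / (i + 1) + log (1 - -t)
      = log (1 + t) - (t - t ^ 2 / 2) := by
    simp only [sum_range_succ, sum_range_zero]; norm_num; ring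
  rw [htaylor, abs_neg, abs_of_nonneg ht₀, show 2 + 1 = 3 from rfl] at h
  refine h.trans ?_
  rw [div_le_iff₀ (by linarith)]
  nlinarith [mul_nonneg (pow_nonneg ht₀ 3) (by linarith : (0 : ℝ) ≤ 1 - 2 * t)]

lemma abs_digammaRemainder_sub_add_one_le {y : ℝ} (hy : 2 ≤ y) :
    |digammaRemainder y - digammaRemainder (y + 1)| ≤ 6 / y ^ 2 - 6 / (y + 1) ^ 2 := by
  have hy₀ : 0 < y := by linarith
  have hstep : digammaRemainder y - digammaRemainder (y + 1)
      = (log (1 + y⁻¹) - (y⁻¹ - y⁻¹ ^ 2 / 2)) - (2 * y ^ 2 * (y + 1))⁻¹ := by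
    rw [digammaRemainder, digammaRemainder, digamma_add_one (by linarith : 0 < y + 1),
      show 1 + y⁻¹ = (y + 1) / y by field_simp, log_div (by linarith) hy₀.ne']
    field_simp
    ring
  have hlog := abs_log_one_add_sub_le (inv_nonneg.2 hy₀.le)
    (by rw [inv_le_comm₀ hy₀ (by norm_num)]; linarith)
  calc |digammaRemainder y - digammaRemainder (y + 1)|
      ≤ |log (1 + y⁻¹) - (y⁻¹ - y⁻¹ ^ 2 / 2)| + |(2 * y ^ 2 * (y + 1))⁻¹| := by
        rw [hstep]; exact abs_sub _ _
    _ ≤ 2 * y⁻¹ ^ 3 + (2 * y ^ 2 * (y + 1))⁻¹ := by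
        rw [abs_of_pos (by positivity : 0 < (2 * y ^ 2 * (y + 1))⁻¹)]
        exact add_le_add hlog le_rfl
    _ ≤ 6 / y ^ 2 - 6 / (y + 1) ^ 2 := by
        rw [div_sub_div _ _ (by positivity) (by positivity), le_div_iff₀ (by positivity)]
        field_simp
        nlinarith [pow_pos hy₀ 2, pow_pos hy₀ 3, pow_pos hy₀ 4]

lemma abs_le_of_tendsto_zero_of_abs_sub_succ_le {u q : ℕ → ℝ} (hu : Tendsto u atTop (𝓝 0))
    (hq : ∀ n, 0 ≤ q n) (h : ∀ n, |u n - u (n + 1)| ≤ q n - q (n + 1)) : |u 0| ≤ q 0 := by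
  have hpartial : ∀ N, |u 0 - u N| ≤ q 0 := fun N => calc
    |u 0 - u N| ≤ ∑ n ∈ range N, |u n - u (n + 1)| := by
        rw [← sum_range_sub' u N]; exact abs_sum_le_sum_abs _ _
    _ ≤ ∑ n ∈ range N, (q n - q (n + 1)) := sum_le_sum fun n _ => h n
    _ ≤ q 0 := by rw [sum_range_sub']; linarith [hq N]
  simpa using le_of_tendsto ((tendsto_const_nhds.sub hu).abs) (Eventually.of_forall hpartial)

lemma abs_digammaRemainder_le {x : ℝ} (hx : 2 ≤ x) : |digammaRemainder x| ≤ 6 / x ^ 2 := by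
  have hshift : Tendsto (fun n : ℕ => x + n) atTop atTop :=
    tendsto_atTop_add_const_left _ x tendsto_natCast_atTop_atTop
  simpa using abs_le_of_tendsto_zero_of_abs_sub_succ_le
    (u := fun n : ℕ => digammaRemainder (x + n)) (q := fun n : ℕ => 6 / (x + n) ^ 2)
    (tendsto_digammaRemainder_atTop.comp hshift) (fun n => by positivity) fun n => by
      push_cast
      rw [← add_assoc]
      exact abs_digammaRemainder_sub_add_one_le (by linarith [n.cast_nonneg (α := ℝ)])

lemma mutualInformation_sub_eq_sum_digammaRemainder {ι : Type*} [Fintype ι] {a : ι → ℝ} {S : ℝ}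
    (ha : ∀ k, a k ≠ 0) (hS₀ : S ≠ 0) (hS : ∑ k, a k = S) :
    ((-∑ k, (a k / S) * log (a k / S))
        - (-∑ k, (a k / S) * (digamma (a k + 1) - digamma (S + 1))))
      - (Fintype.card ι - 1) / (2 * S)
      = ∑ k, a k / S * digammaRemainder (a k) - digammaRemainder S := by
  have hterm : ∀ k, a k / S * (digamma (a k + 1) - digamma (S + 1)) - a k / S * log (a k / S)
      = a k / S * digammaRemainder (a k) - a k / S * (digammaRemainder S + (2 * S)⁻¹)
        + (2 * S)⁻¹ := fun k => by
    have hak := ha k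
    rw [digammaRemainder, digammaRemainder, log_div hak hS₀]
    field_simp
    ring
  have hweights : ∑ k, a k / S = 1 := by rw [← sum_div, hS, div_self hS₀]
  rw [neg_sub_neg, ← sum_sub_distrib, sum_congr rfl fun k _ => hterm k, sum_add_distrib,
    sum_sub_distrib, ← sum_mul, hweights, sum_const, card_univ, nsmul_eq_mul]
  ring

lemma abs_sum_mul_digammaRemainder_sub_le {ι : Type*} [Fintype ι] {a c : ι → ℝ} {S : ℝ}
    (hS : 2 ≤ S) (ha : ∀ k, 2 ≤ a k) (hc : ∀ k, 0 < c k) (hca : ∀ k, c k ≤ a k / S) :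
    |∑ k, a k / S * digammaRemainder (a k) - digammaRemainder S|
      ≤ (6 + ∑ k, 6 / c k) / S ^ 2 := by
  have hterm : ∀ k, |a k / S * digammaRemainder (a k)| ≤ 6 / c k / S ^ 2 := fun k => by
    have hp : 0 < a k / S := by linarith [hc k, hca k]
    calc |a k / S * digammaRemainder (a k)| = a k / S * |digammaRemainder (a k)| := by
          rw [abs_mul, abs_of_pos hp]
      _ ≤ a k / S * (6 / a k ^ 2) :=
          mul_le_mul_of_nonneg_left (abs_digammaRemainder_le (ha k)) hp.le
      _ = 6 / (a k / S) / S ^ 2 := by field_simp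
      _ ≤ 6 / c k / S ^ 2 := by gcongr; exacts [hc k, hca k]
  calc |∑ k, a k / S * digammaRemainder (a k) - digammaRemainder S|
      ≤ ∑ k, |a k / S * digammaRemainder (a k)| + |digammaRemainder S| :=
        (abs_sub _ _).trans (add_le_add (abs_sum_le_sum_abs _ _) le_rfl)
    _ ≤ ∑ k, 6 / c k / S ^ 2 + 6 / S ^ 2 :=
        add_le_add (sum_le_sum fun k _ => hterm k) (abs_digammaRemainder_le hS)
    _ = (6 + ∑ k, 6 / c k) / S ^ 2 := by rw [← sum_div]; ring

lemma tendsto_atTop_of_tendsto_div_self {f : ℝ → ℝ} {c : ℝ} (hc : 0 < c)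
    (h : Tendsto (fun x => f x / x) atTop (𝓝 c)) : Tendsto f atTop atTop :=
  (h.pos_mul_atTop hc tendsto_id).congr' <| by
    filter_upwards [eventually_ne_atTop 0] with x hx
    exact div_mul_cancel₀ _ hx

theorem mutual_information_asymptotic_general {K : ℕ}
    (α : ℝ → Fin K → ℝ) (pibar : Fin K → ℝ)
    (hsum : ∀ S > (0 : ℝ), ∑ k, α S k = S)
    (hpppos : ∀ k, 0 < pibar k)
    (hlim : ∀ k, Tendsto (fun S => α S k / S) atTop (nhds (pibar k))) :
    ∃ C S₀ : ℝ, 0 < C ∧ 0 < S₀ ∧ ∀ S : ℝ, S₀ ≤ S →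
      |((-∑ k, (α S k / S) * Real.log (α S k / S))
          - (-∑ k, (α S k / S) * (digamma (α S k + 1) - digamma (S + 1))))
        - (K - 1) / (2 * S)| ≤ C / S ^ 2 := by
  have hlower : ∀ᶠ S in atTop, ∀ k, pibar k / 2 ≤ α S k / S := eventually_all.2 fun k =>
    (hlim k).eventually (eventually_ge_nhds (half_lt_self (hpppos k)))
  have hlarge : ∀ᶠ S in atTop, ∀ k, 2 ≤ α S k := eventually_all.2 fun k =>
    (tendsto_atTop_of_tendsto_div_self (hpppos k) (hlim k)).eventually_ge_atTop 2
  obtain ⟨S₀, hS₀⟩ := (hlower.and (hlarge.and (eventually_ge_atTop 2))).exists_forall_of_atTop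
  have hC : 0 ≤ ∑ k, 6 / (pibar k / 2) := sum_nonneg fun k _ => by have := hpppos k; positivity
  refine ⟨6 + ∑ k, 6 / (pibar k / 2), S₀ ⊔ 2, by linarith, by positivity, fun S hS => ?_⟩
  obtain ⟨hlow, hα, hS2⟩ := hS₀ S (le_of_max_le_left hS)
  have hI := mutualInformation_sub_eq_sum_digammaRemainder
    (fun k => (zero_lt_two.trans_le (hα k)).ne') (by positivity) (hsum S (by positivity))
  rw [Fintype.card_fin] at hI
  rw [hI]
  exact abs_sum_mul_digammaRemainder_sub_le hS2 hα (fun k => half_pos (hpppos k)) hlow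

/-- Asymptotic behavior of the Dirichlet–categorical mutual information
`I = H(E[pp]) − E[H(pp)]`. If `α(S)/S → pp̄` in the interior of the simplex with
`Σ_k α(S)_k = S`, then `I(S) = (K−1)/(2S) + O(1/S²)`. -/
theorem mutual_information_asymptotic {K : ℕ} (hK : 1 ≤ K)
    (α : ℝ → Fin K → ℝ) (pibar : Fin K → ℝ)
    (hαpos : ∀ S > (0 : ℝ), ∀ k, 0 < α S k)
    (hsum : ∀ S > (0 : ℝ), ∑ k, α S k = S)
    (hpppos : ∀ k, 0 < pibar k) (hppsum : ∑ k, pibar k = 1)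
    (hlim : ∀ k, Tendsto (fun S => α S k / S) atTop (nhds (pibar k))) :
    ∃ C S₀ : ℝ, 0 < C ∧ 0 < S₀ ∧ ∀ S : ℝ, S₀ ≤ S →
      |((-∑ k, (α S k / S) * Real.log (α S k / S))
          - (-∑ k, (α S k / S) * (digamma (α S k + 1) - digamma (S + 1))))
        - (K - 1) / (2 * S)| ≤ C / S ^ 2 :=
  mutual_information_asymptotic_general α pibar hsum hpppos hlim
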